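/- With M_n = C_n ⊕ M_0 and M'_n = P(C_n, M_0) ⊕ S as above, the characteristic polynomials coincide: χ_{M_n}(t) = χ_{M'_n}(t), i.e., T_{M_n}(1-t, 0) = T_{M'_n}(1-t, 0). -/

import Mathlib

open MvPolynomial Classical
open scoped Matroid

variable {α β : Type*}

/-- The rank of a set in a matroid: the largest cardinality of an independent subset. -/
noncomputable def Matroid.mrank (M : Matroid α) (X : Set α) : ℕ :=
  sSup {n | ∃ I, M.Indep I ∧ I ⊆ X ∧ I.ncard = n}

/-- The Tutte polynomial (corank–nullity sum) of a matroid on a finite type,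
as a polynomial in two variables `X 0` and `X 1`. -/
noncomputable def Matroid.tutte [Fintype α] (M : Matroid α) : MvPolynomial (Fin 2) ℤ :=
  ∑ A ∈ Finset.univ.filter (fun A : Finset α => (A : Set α) ⊆ M.E),
    (X 0 - 1) ^ (M.mrank M.E - M.mrank (A : Set α)) *
      (X 1 - 1) ^ (A.card - M.mrank (A : Set α))

/-- A circuit: a minimal dependent subset of the ground set. -/
def Matroid.IsCirc (M : Matroid α) (C : Set α) : Prop :=
  C ⊆ M.E ∧ ¬ M.Indep C ∧ ∀ D ⊂ C, M.Indep D

/-- Deletion of a set of elements. -/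
def Matroid.del (M : Matroid α) (D : Set α) : Matroid α := M ↾ (M.E \ D)

/-- Contraction of a set of elements, via the dual. -/
def Matroid.con (M : Matroid α) (C : Set α) : Matroid α := (M✶ ↾ (M✶.E \ C))✶

/-- A coloop (isthmus): an element of every base. -/
def Matroid.IsColoopElt (M : Matroid α) (e : α) : Prop := ∀ B, M.IsBase B → e ∈ B

/-- A simple matroid: every set of at most two elements of the ground set is independent. -/
def Matroid.IsSimple (M : Matroid α) : Prop := ∀ X ⊆ M.E, X.ncard ≤ 2 → M.Indep X

/-- A connected matroid: any two distinct elements lie on a common circuit. -/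
def Matroid.IsConnected (M : Matroid α) : Prop :=
  M.E.Nonempty ∧ ∀ e ∈ M.E, ∀ f ∈ M.E, e = f ∨ ∃ C, M.IsCirc C ∧ e ∈ C ∧ f ∈ C


/-!
Both sides split as products because `χ` is multiplicative on direct sums, and the isthmus
contributes `1 - t`. Write `E₁' = E₁ \ {ε₀}` for the circuit `E₁` of `C_n` with `ε₀` removed.
In the parallel connection `P` of `M₀` with the circuit on `E₁`, split a set as `u ∪ v` with
`u ⊆ E₁'` and `v ⊆ E(M₀)`. If `u ≠ E₁'`, some element of the circuit is missing, no circuit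
through the cycle part fits, and `r_P(u ∪ v) = |u| + r_{M₀}(v)`. If `u = E₁'`, then `ε₀` lies in
the closure of `u ∪ v`, so the terms of `v` and `v ∪ {ε₀}` cancel. Hence
`χ(P) = Q(t) χ(M₀)` with `Q(t) = ∑_{u ⊊ E₁'} (-t)^(n-2-|u|)`. The circuit itself is the parallel
connection of the circuit with the free matroid on `{ε₀}`, so `χ(C_n) = Q(t) (1 - t)`, and both
sides of the theorem equal `Q(t) (1 - t) χ(M₀)`.
-/

lemma Set.disjoint_sdiff_singleton_of_inter_eq {s t : Set α} {a : α} (h : s ∩ t = {a}) :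
    Disjoint (s \ {a}) t := by
  rw [Set.disjoint_iff_inter_eq_empty, ← Set.inter_sdiff_right_comm, h, Set.sdiff_self]

lemma Finset.coe_eq_image_toLeft_union_image_toRight (A : Finset (α ⊕ β)) :
    (A : Set (α ⊕ β)) = Sum.inl '' A.toLeft ∪ Sum.inr '' A.toRight := by
  ext (x | x) <;> simp

lemma Finset.filter_coe_subset_eq_powerset_toFinset [Fintype α] (E : Set α) :
    Finset.univ.filter (fun A : Finset α => (A : Set α) ⊆ E) = E.toFinset.powerset := by
  ext A
  simp [← Set.subset_toFinset]

lemma Finset.sum_powerset_union {γ R : Type*} [DecidableEq γ] [AddCommMonoid R]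
    {s t : Finset γ} (hst : Disjoint s t) (f : Finset γ → R) :
    ∑ A ∈ (s ∪ t).powerset, f A = ∑ u ∈ s.powerset, ∑ v ∈ t.powerset, f (u ∪ v) := by
  rw [Finset.powerset_union, ← Finset.image_sup_product, Finset.sum_image, Finset.sum_product]
  · rfl
  rintro ⟨u, v⟩ huv ⟨u', v'⟩ huv' h
  simp only [Finset.coe_product, Set.mem_prod, Finset.mem_coe, Finset.mem_powerset] at huv huv'
  have hs := Finset.disjoint_left.1 hst
  simp only [Function.uncurry_apply_pair, Finset.sup_eq_union, Finset.ext_iff,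
    Finset.mem_union, Prod.mk.injEq] at h ⊢
  grind

namespace Matroid

lemma isCirc_iff_isCircuit {M : Matroid α} {C : Set α} : M.IsCirc C ↔ M.IsCircuit C := by
  rw [isCircuit_iff_forall_ssubset, Dep, IsCirc]
  tauto

lemma not_isCircuit_freeOn (S C : Set α) : ¬ (freeOn S).IsCircuit C :=
  fun h => h.dep.not_indep (freeOn_indep h.subset_ground)

section mrank

variable [Finite α] {M : Matroid α} {I X Y : Set α} {e : α}

lemma IsBasis'.mrank_eq (hI : M.IsBasis' I X) : M.mrank X = I.ncard := by
  refine IsGreatest.csSup_eq ⟨⟨I, hI.indep, hI.subset, rfl⟩, ?_⟩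
  rintro _ ⟨J, hJ, hJX, rfl⟩
  rw [← Nat.cast_le (α := ℕ∞), J.toFinite.cast_ncard_eq, I.toFinite.cast_ncard_eq,
    hI.encard_eq_eRk]
  exact hJ.encard_le_eRk_of_subset hJX

lemma cast_mrank (M : Matroid α) (X : Set α) : (M.mrank X : ℕ∞) = M.eRk X := by
  obtain ⟨I, hI⟩ := M.exists_isBasis' X
  rw [hI.mrank_eq, I.toFinite.cast_ncard_eq, hI.encard_eq_eRk]

lemma Indep.ncard_le_mrank (hI : M.Indep I) (hIX : I ⊆ X) : I.ncard ≤ M.mrank X := by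
  rw [← Nat.cast_le (α := ℕ∞), I.toFinite.cast_ncard_eq, cast_mrank]
  exact hI.encard_le_eRk_of_subset hIX

lemma Indep.mrank_eq (hI : M.Indep I) : M.mrank I = I.ncard :=
  hI.isBasis_self.isBasis'.mrank_eq

lemma mrank_mono (hXY : X ⊆ Y) : M.mrank X ≤ M.mrank Y := by
  rw [← Nat.cast_le (α := ℕ∞), cast_mrank, cast_mrank]
  exact M.eRk_mono hXY

lemma mrank_le_ncard (M : Matroid α) (X : Set α) : M.mrank X ≤ X.ncard := by
  rw [← Nat.cast_le (α := ℕ∞), cast_mrank, X.toFinite.cast_ncard_eq]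
  exact M.eRk_le_encard X

lemma mrank_insert_of_mem_closure (he : e ∈ M.closure X) :
    M.mrank (insert e X) = M.mrank X := by
  rw [← Nat.cast_inj (R := ℕ∞), cast_mrank, cast_mrank, ← eRk_insert_closure_eq,
    Set.insert_eq_of_mem he, eRk_closure_eq]

end mrank

lemma mrank_eq_ncard_sdiff_add_mrank_inter [Finite α] {N M : Matroid α} {X : Set α}
    (h : ∀ I ⊆ X, N.Indep I ↔ M.Indep (I ∩ M.E)) :
    N.mrank X = (X \ M.E).ncard + M.mrank (X ∩ M.E) := by
  apply le_antisymm
  · obtain ⟨I, hI⟩ := N.exists_isBasis' X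
    have hIM := ((h I hI.subset).1 hI.indep).ncard_le_mrank
      (Set.inter_subset_inter_left _ hI.subset)
    have hIc := Set.ncard_le_ncard (Set.sdiff_subset_sdiff_left (t := M.E) hI.subset)
    rw [hI.mrank_eq, ← Set.ncard_inter_add_ncard_sdiff_eq_ncard I M.E]
    omega
  · obtain ⟨J, hJ⟩ := M.exists_isBasis' (X ∩ M.E)
    have hJE : J ⊆ M.E := hJ.subset.trans Set.inter_subset_right
    have hJX : (X \ M.E) ∪ J ⊆ X :=
      Set.union_subset Set.sdiff_subset (hJ.subset.trans Set.inter_subset_left)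
    have hind : N.Indep ((X \ M.E) ∪ J) := by
      rw [h _ hJX, Set.union_inter_distrib_right, Set.sdiff_inter_self, Set.empty_union,
        Set.inter_eq_left.2 hJE]
      exact hJ.indep
    rw [hJ.mrank_eq, ← Set.ncard_union_eq (Set.disjoint_left.2 fun x hx hxJ => hx.2 (hJE hxJ))]
    exact hind.ncard_le_mrank hJX

lemma mrank_sum_image [Finite α] [Finite β] (M : Matroid α) (N : Matroid β) {X : Set α}
    {Y : Set β} (hX : X ⊆ M.E) (hY : Y ⊆ N.E) :
    (M.sum N).mrank (Sum.inl '' X ∪ Sum.inr '' Y) = M.mrank X + N.mrank Y := by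
  obtain ⟨I, hI⟩ := M.exists_isBasis X
  obtain ⟨J, hJ⟩ := N.exists_isBasis Y
  have hIJ : (M.sum N).IsBasis (Sum.inl '' I ∪ Sum.inr '' J) (Sum.inl '' X ∪ Sum.inr '' Y) := by
    simpa [Set.preimage_union, Set.preimage_image_eq _ Sum.inl_injective,
      Set.preimage_image_eq _ Sum.inr_injective] using And.intro hI hJ
  rw [hIJ.isBasis'.mrank_eq, hI.isBasis'.mrank_eq, hJ.isBasis'.mrank_eq,
    Set.ncard_union_eq Set.disjoint_image_inl_image_inr,
    Set.ncard_image_of_injective _ Sum.inl_injective,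
    Set.ncard_image_of_injective _ Sum.inr_injective]

lemma coe_subset_sum_ground_iff (M : Matroid α) (N : Matroid β) (A : Finset (α ⊕ β)) :
    (A : Set (α ⊕ β)) ⊆ (M.sum N).E ↔ (A.toLeft : Set α) ⊆ M.E ∧ (A.toRight : Set β) ⊆ N.E := by
  rw [A.coe_eq_image_toLeft_union_image_toRight, sum_ground, Set.union_subset_iff]
  simp [Set.image_subset_iff, Set.preimage_union, Set.preimage_image_eq _ Sum.inl_injective,
    Set.preimage_image_eq _ Sum.inr_injective]

theorem tutte_sum [Fintype α] [Fintype β] (M : Matroid α) (N : Matroid β) :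
    (M.sum N).tutte = M.tutte * N.tutte := by
  simp only [tutte, Finset.sum_filter]
  rw [Finset.sum_mul_sum, ← Fintype.sum_prod_type', Fintype.sum_equiv Finset.sumEquiv.toEquiv]
  intro A
  rw [show Finset.sumEquiv.toEquiv A = (A.toLeft, A.toRight) from rfl]
  by_cases h : (A.toLeft : Set α) ⊆ M.E ∧ (A.toRight : Set β) ⊆ N.E
  · obtain ⟨hL, hR⟩ := h
    rw [if_pos ((coe_subset_sum_ground_iff M N A).2 ⟨hL, hR⟩), if_pos hL, if_pos hR,
      A.coe_eq_image_toLeft_union_image_toRight, sum_ground, mrank_sum_image _ _ hL hR,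
      mrank_sum_image _ _ subset_rfl subset_rfl, ← A.card_toLeft_add_card_toRight]
    have := mrank_mono (M := M) hL
    have := mrank_mono (M := N) hR
    have := (M.mrank_le_ncard A.toLeft).trans_eq (Set.ncard_coe_finset _)
    have := (N.mrank_le_ncard A.toRight).trans_eq (Set.ncard_coe_finset _)
    rw [show M.mrank M.E + N.mrank N.E - (M.mrank A.toLeft + N.mrank A.toRight) =
        (M.mrank M.E - M.mrank A.toLeft) + (N.mrank N.E - N.mrank A.toRight) by omega,
      show A.toLeft.card + A.toRight.card - (M.mrank A.toLeft + N.mrank A.toRight) =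
        (A.toLeft.card - M.mrank A.toLeft) + (A.toRight.card - N.mrank A.toRight) by omega]
    ring
  · rw [if_neg (mt (coe_subset_sum_ground_iff M N A).1 h)]
    rcases not_and_or.1 h with h | h <;> simp [h]

theorem tutte_freeOn [Fintype α] (S : Set α) : (freeOn S).tutte = X 0 ^ S.ncard := by
  have hrank {A : Set α} (hA : A ⊆ S) : (freeOn S).mrank A = A.ncard :=
    (freeOn_indep hA).mrank_eq
  rw [tutte, Finset.filter_coe_subset_eq_powerset_toFinset, freeOn_ground, hrank subset_rfl,
    Set.ncard_eq_toFinset_card']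
  trans ∑ A ∈ S.toFinset.powerset, 1 ^ A.card * (X 0 - 1) ^ (S.toFinset.card - A.card)
  · refine Finset.sum_congr rfl fun A hA => ?_
    rw [Finset.mem_powerset, ← Finset.coe_subset, Set.coe_toFinset] at hA
    rw [hrank hA, Set.ncard_coe_finset, Nat.sub_self, pow_zero, mul_one, one_pow, one_mul]
  · rw [Finset.sum_pow_mul_eq_add_pow, add_sub_cancel]

noncomputable def charPoly [Fintype α] (M : Matroid α) : Polynomial ℤ :=
  aeval (fun i : Fin 2 => if i = 0 then 1 - Polynomial.X else (0 : Polynomial ℤ)) M.tutte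

noncomputable def charTerm (M : Matroid α) (A : Set α) : Polynomial ℤ :=
  (-Polynomial.X) ^ (M.mrank M.E - M.mrank A) * (-1) ^ (A.ncard - M.mrank A)

lemma charPoly_eq_sum [Fintype α] (M : Matroid α) :
    M.charPoly = ∑ A ∈ M.E.toFinset.powerset, M.charTerm A := by
  rw [charPoly, tutte, Finset.filter_coe_subset_eq_powerset_toFinset, map_sum]
  refine Finset.sum_congr rfl fun A _ => ?_
  simp [charTerm]

lemma charPoly_sum [Fintype α] [Fintype β] (M : Matroid α) (N : Matroid β) :
    (M.sum N).charPoly = M.charPoly * N.charPoly := by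
  rw [charPoly, tutte_sum, map_mul, ← charPoly, ← charPoly]

lemma charPoly_freeOn [Fintype α] (S : Set α) :
    (freeOn S).charPoly = (1 - Polynomial.X) ^ S.ncard := by
  simp [charPoly, tutte_freeOn]

section cancellation

variable [Finite α] {M : Matroid α} {A Y : Set α} {e : α}

lemma charTerm_add_charTerm_insert_eq_zero (heA : e ∉ A)
    (h : M.mrank (insert e A) = M.mrank A) : M.charTerm A + M.charTerm (insert e A) = 0 := by
  have := M.mrank_le_ncard A
  rw [charTerm, charTerm, h, Set.ncard_insert_of_notMem heA,
    show A.ncard + 1 - M.mrank A = A.ncard - M.mrank A + 1 by omega, pow_succ]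
  ring

lemma sum_charTerm_union_eq_zero {T : Finset α} (he : e ∈ M.closure Y) (heY : e ∉ Y)
    (heT : e ∈ T) : ∑ v ∈ T.powerset, M.charTerm (Y ∪ v) = 0 := by
  rw [← Finset.insert_erase heT, Finset.sum_powerset_insert (Finset.notMem_erase e T),
    ← Finset.sum_add_distrib]
  refine Finset.sum_eq_zero fun w hw => ?_
  have hew : e ∉ Y ∪ w := by
    rintro (h | h)
    · exact heY h
    · exact Finset.notMem_erase e T (Finset.mem_powerset.1 hw h)
  rw [Finset.coe_insert, Set.union_insert]
  exact charTerm_add_charTerm_insert_eq_zero hew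
    (mrank_insert_of_mem_closure (M.closure_subset_closure Set.subset_union_left he))

end cancellation

/-- The parallel connection `P(C, M₀)` at `ε₀` of `M₀` with the circuit `C` on `E₁`. -/
structure IsParallelConnectionCircuit (P M₀ : Matroid α) (E₁ : Set α) (ε₀ : α) : Prop where
  inter_eq : E₁ ∩ M₀.E = {ε₀}
  ground_eq : P.E = E₁ ∪ M₀.E
  isCircuit_iff : ∀ C, P.IsCircuit C ↔ C = E₁ ∨ M₀.IsCircuit C ∨
    ∃ C₂, M₀.IsCircuit C₂ ∧ ε₀ ∈ C₂ ∧ C = (E₁ \ {ε₀}) ∪ (C₂ \ {ε₀})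

namespace IsParallelConnectionCircuit

variable {P M₀ : Matroid α} {E₁ : Set α} {ε₀ : α} {n : ℕ}

lemma mem_inter (h : IsParallelConnectionCircuit P M₀ E₁ ε₀) : ε₀ ∈ E₁ ∩ M₀.E :=
  h.inter_eq ▸ rfl

lemma disjoint (h : IsParallelConnectionCircuit P M₀ E₁ ε₀) : Disjoint (E₁ \ {ε₀}) M₀.E :=
  Set.disjoint_sdiff_singleton_of_inter_eq h.inter_eq

lemma indep_iff_of_notMem (h : IsParallelConnectionCircuit P M₀ E₁ ε₀) {e : α}
    (he : e ∈ E₁ \ {ε₀}) {I : Set α} (hI : I ⊆ P.E) (heI : e ∉ I) :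
    P.Indep I ↔ M₀.Indep (I ∩ M₀.E) := by
  rw [indep_iff_forall_subset_not_isCircuit hI,
    indep_iff_forall_subset_not_isCircuit Set.inter_subset_right]
  constructor
  · exact fun hP C hCI hC =>
      hP C (hCI.trans Set.inter_subset_left) ((h.isCircuit_iff C).2 (Or.inr (Or.inl hC)))
  · intro hM C hCI hC
    rcases (h.isCircuit_iff C).1 hC with rfl | hC | ⟨C₂, -, -, rfl⟩
    · exact heI (hCI he.1)
    · exact hM C (Set.subset_inter hCI hC.subset_ground) hC
    · exact heI (hCI (Or.inl he))

lemma mrank_union [Finite α] (h : IsParallelConnectionCircuit P M₀ E₁ ε₀) {u v : Set α}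
    (hu : u ⊂ E₁ \ {ε₀}) (hv : v ⊆ M₀.E) : P.mrank (u ∪ v) = u.ncard + M₀.mrank v := by
  obtain ⟨e, he, heu⟩ := Set.exists_of_ssubset hu
  have hdisj : Disjoint u M₀.E := h.disjoint.mono_left hu.subset
  have huv : u ∪ v ⊆ P.E :=
    h.ground_eq ▸ Set.union_subset_union (hu.subset.trans Set.sdiff_subset) hv
  have heuv : e ∉ u ∪ v := fun h' => h'.elim heu fun hev => Set.disjoint_left.1 h.disjoint he (hv hev)
  rw [mrank_eq_ncard_sdiff_add_mrank_inter (M := M₀) fun I hI =>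
      h.indep_iff_of_notMem he (hI.trans huv) fun heI => heuv (hI heI),
    Set.union_sdiff_distrib, hdisj.sdiff_eq_left, Set.sdiff_eq_empty.2 hv, Set.union_empty,
    Set.union_inter_distrib_right, hdisj.inter_eq, Set.empty_union, Set.inter_eq_left.2 hv]

lemma mrank_ground [Finite α] (h : IsParallelConnectionCircuit P M₀ E₁ ε₀)
    (hE₁ : E₁.ncard = n) (hn : 2 ≤ n) : P.mrank P.E = n - 2 + M₀.mrank M₀.E := by
  have hε := h.mem_inter
  obtain ⟨e, heE₁, heε⟩ := Set.exists_ne_of_one_lt_ncard (by omega : 1 < E₁.ncard) ε₀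
  have he : e ∈ E₁ \ {ε₀} := ⟨heE₁, heε⟩
  set u := (E₁ \ {ε₀}) \ {e}
  have hground : P.E = insert e (u ∪ M₀.E) := by
    ext x
    simp only [h.ground_eq, u, Set.mem_union, Set.mem_insert_iff, Set.mem_sdiff,
      Set.mem_singleton_iff]
    grind
  -- `e` is spanned by the rest of the circuit `E₁`, all of which lies in `u ∪ E(M₀)`.
  have hcl : e ∈ P.closure (u ∪ M₀.E) := by
    refine P.closure_subset_closure ?_
      (((h.isCircuit_iff E₁).2 (Or.inl rfl)).mem_closure_sdiff_singleton_of_mem heE₁)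
    intro x ⟨hx, hxe⟩
    simp only [u, Set.mem_union, Set.mem_sdiff, Set.mem_singleton_iff] at hxe ⊢
    grind
  rw [hground, mrank_insert_of_mem_closure hcl,
    h.mrank_union (Set.sdiff_singleton_ssubset.2 he) subset_rfl,
    Set.ncard_sdiff_singleton_of_mem he, Set.ncard_sdiff_singleton_of_mem hε.1, hE₁]
  omega

lemma charTerm_union [Finite α] (h : IsParallelConnectionCircuit P M₀ E₁ ε₀)
    (hE₁ : E₁.ncard = n) (hn : 2 ≤ n) {u v : Set α} (hu : u ⊂ E₁ \ {ε₀}) (hv : v ⊆ M₀.E) :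
    P.charTerm (u ∪ v) = (-Polynomial.X) ^ (n - 2 - u.ncard) * M₀.charTerm v := by
  have hu_card : u.ncard < n - 1 := by
    rw [← hE₁, ← Set.ncard_sdiff_singleton_of_mem h.mem_inter.1]
    exact Set.ncard_lt_ncard hu
  have := M₀.mrank_le_ncard v
  have := mrank_mono (M := M₀) hv
  rw [charTerm, charTerm, h.mrank_ground hE₁ hn, h.mrank_union hu hv,
    Set.ncard_union_eq (h.disjoint.mono hu.subset hv),
    show u.ncard + v.ncard - (u.ncard + M₀.mrank v) = v.ncard - M₀.mrank v by omega,
    show n - 2 + M₀.mrank M₀.E - (u.ncard + M₀.mrank v) =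
      (n - 2 - u.ncard) + (M₀.mrank M₀.E - M₀.mrank v) by omega, pow_add]
  ring

theorem charPoly_eq [Fintype α] (h : IsParallelConnectionCircuit P M₀ E₁ ε₀)
    (hE₁ : E₁.ncard = n) (hn : 2 ≤ n) :
    P.charPoly = (∑ u ∈ (E₁ \ {ε₀}).toFinset.ssubsets, (-Polynomial.X) ^ (n - 2 - u.card)) *
      M₀.charPoly := by
  have hground : P.E.toFinset = (E₁ \ {ε₀}).toFinset ∪ M₀.E.toFinset := by
    have := h.mem_inter
    ext x
    simp only [h.ground_eq, Set.mem_toFinset, Finset.mem_union, Set.mem_union, Set.mem_sdiff,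
      Set.mem_singleton_iff]
    grind
  have hcl : ε₀ ∈ P.closure (E₁ \ {ε₀}) :=
    ((h.isCircuit_iff E₁).2 (Or.inl rfl)).mem_closure_sdiff_singleton_of_mem h.mem_inter.1
  rw [charPoly_eq_sum, hground, Finset.sum_powerset_union (Set.disjoint_toFinset.2 h.disjoint),
    ← Finset.sum_erase_add _ _ (Finset.mem_powerset_self _)]
  simp only [Finset.coe_union, Set.coe_toFinset]
  rw [sum_charTerm_union_eq_zero hcl (fun h => h.2 rfl) (Set.mem_toFinset.2 h.mem_inter.2),
    add_zero, Finset.sum_mul]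
  refine Finset.sum_congr rfl fun u hu => ?_
  replace hu : (u : Set α) ⊂ E₁ \ {ε₀} := by
    rw [← Set.coe_toFinset (E₁ \ {ε₀}), Finset.coe_ssubset]
    exact Finset.mem_ssubsets.1 hu
  rw [charPoly_eq_sum, Finset.mul_sum]
  refine Finset.sum_congr rfl fun v hv => ?_
  rw [Finset.mem_powerset, ← Finset.coe_subset, Set.coe_toFinset] at hv
  rw [h.charTerm_union hE₁ hn hu hv, Set.ncard_coe_finset]

end IsParallelConnectionCircuit

end Matroid

open Matroid in
theorem charpoly_eq_of_parallelConnection_general [Fintype α] (n : ℕ) (hn : 2 ≤ n) (M₀ Cn P : Matroid α)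
    (ε₀ : α)
    (hCncirc : ∀ C, Cn.IsCirc C ↔ C = Cn.E) (hCncard : Cn.E.ncard = n)
    (hmeet : Cn.E ∩ M₀.E = {ε₀})
    (hPE : P.E = Cn.E ∪ M₀.E)
    (hPcirc : ∀ C, P.IsCirc C ↔ (Cn.IsCirc C ∨ M₀.IsCirc C ∨
      ∃ C₁ C₂, Cn.IsCirc C₁ ∧ M₀.IsCirc C₂ ∧ ε₀ ∈ C₁ ∧ ε₀ ∈ C₂ ∧
        C = (C₁ \ {ε₀}) ∪ (C₂ \ {ε₀}))) :
    MvPolynomial.aeval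
        (fun i : Fin 2 => if i = 0 then 1 - Polynomial.X else (0 : Polynomial ℤ))
        (Cn.sum M₀).tutte =
      MvPolynomial.aeval
        (fun i : Fin 2 => if i = 0 then 1 - Polynomial.X else (0 : Polynomial ℤ))
        (P.sum (Matroid.freeOn (Set.univ : Set Unit))).tutte := by
  have hε₀ : ε₀ ∈ Cn.E := (hmeet ▸ rfl : ε₀ ∈ Cn.E ∩ M₀.E).1
  -- `C_n` is itself the parallel connection of its circuit with the free matroid on `{ε₀}`.
  have hCn : IsParallelConnectionCircuit Cn (freeOn {ε₀}) Cn.E ε₀ := by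
    refine ⟨by simp [hε₀], by simp [hε₀], fun C => ?_⟩
    rw [← isCirc_iff_isCircuit, hCncirc]
    simp [not_isCircuit_freeOn]
  have hP : IsParallelConnectionCircuit P M₀ Cn.E ε₀ := by
    refine ⟨hmeet, hPE, fun C => ?_⟩
    simp [← isCirc_iff_isCircuit, hPcirc, hCncirc, hε₀]
  change (Cn.sum M₀).charPoly = (P.sum (freeOn Set.univ)).charPoly
  rw [charPoly_sum, charPoly_sum, charPoly_freeOn, Set.ncard_univ, Nat.card_unique, pow_one,
    hCn.charPoly_eq hCncard hn, hP.charPoly_eq hCncard hn, charPoly_freeOn,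
    Set.ncard_singleton, pow_one]
  ring

/-- `M_n = C_n ⊕ M₀` and `M'_n = P(C_n, M₀) ⊕ S` have equal characteristic polynomials:
`T_{M_n}(1 - t, 0) = T_{M'_n}(1 - t, 0)`. -/
theorem charpoly_eq_of_parallelConnection [Fintype α] (n : ℕ) (hn : 2 ≤ n) (M₀ Cn P : Matroid α)
    (hsimple : M₀.IsSimple) (ε₀ : α) (hε : ε₀ ∈ M₀.E)
    (hCncirc : ∀ C, Cn.IsCirc C ↔ C = Cn.E) (hCncard : Cn.E.ncard = n)
    (hmeet : Cn.E ∩ M₀.E = {ε₀})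
    (hPE : P.E = Cn.E ∪ M₀.E)
    (hPcirc : ∀ C, P.IsCirc C ↔ (Cn.IsCirc C ∨ M₀.IsCirc C ∨
      ∃ C₁ C₂, Cn.IsCirc C₁ ∧ M₀.IsCirc C₂ ∧ ε₀ ∈ C₁ ∧ ε₀ ∈ C₂ ∧
        C = (C₁ \ {ε₀}) ∪ (C₂ \ {ε₀}))) :
    MvPolynomial.aeval
        (fun i : Fin 2 => if i = 0 then 1 - Polynomial.X else (0 : Polynomial ℤ))
        (Cn.sum M₀).tutte =
      MvPolynomial.aeval
        (fun i : Fin 2 => if i = 0 then 1 - Polynomial.X else (0 : Polynomial ℤ))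
        (P.sum (Matroid.freeOn (Set.univ : Set Unit))).tutte :=
  charpoly_eq_of_parallelConnection_general n hn M₀ Cn P ε₀ hCncirc hCncard hmeet hPE hPcirc
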